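/- The CNN wavefunction is a correlator product state over motifs: for every state s : ZMod N → Fin M, exp(lnψ(s)) = ∏_{m' : Fin K → Fin M} φ(m')^{m_{m'}(s)}, where the correlator parameters are φ(m') = exp(v · max(q(m'), 0)) and m_{m'}(s) is the number of cyclic occurrences of motif m' in s. -/

import Mathlib

open Finset

/-- The window preactivation of a shallow CNN with cyclic padding. -/
def preact (N K M : ℕ) [NeZero N] (w : Fin K → Fin M → ℝ) (b : ℝ)
    (s : ZMod N → Fin M) (i : ZMod N) : ℝ :=
  (∑ j : Fin K, w j (s (i + (j.val : ZMod N)))) + b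

/-- The log-wavefunction of a shallow ReLU CNN with cyclic padding. -/
def lnPsi (N K M : ℕ) [NeZero N] (w : Fin K → Fin M → ℝ) (b v : ℝ)
    (s : ZMod N → Fin M) : ℝ :=
  v * ∑ i : ZMod N, max (preact N K M w b s i) 0

/-- The number of cyclic occurrences of the `K`-motif `m'` in the state `s`. -/
def motifCount (N K M : ℕ) [NeZero N] (m' : Fin K → Fin M)
    (s : ZMod N → Fin M) : ℕ :=
  (Finset.univ.filter
    (fun i : ZMod N => ∀ j : Fin K, s (i + (j.val : ZMod N)) = m' j)).card

/-- The motif preactivation of a `K`-motif. -/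
def motifPreact (K M : ℕ) (w : Fin K → Fin M → ℝ) (b : ℝ)
    (m' : Fin K → Fin M) : ℝ :=
  (∑ j : Fin K, w j (m' j)) + b

/-! The ReLU term at site `i` depends on `s` only through the motif seen in the window at `i`,
so grouping the sites by that motif turns the product over sites into a product over motifs,
each factor raised to the motif's count. -/

def window (N K M : ℕ) (s : ZMod N → Fin M) (i : ZMod N) : Fin K → Fin M :=
  fun j => s (i + (j.val : ZMod N))

lemma prod_comp_eq_prod_pow_card_fiber {ι κ R : Type*} [Fintype ι] [Fintype κ] [DecidableEq κ]
    [CommMonoid R] (f : κ → R) (g : ι → κ) :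
    ∏ i, f (g i) = ∏ k, f k ^ #{i | g i = k} := by
  simp_rw [← Finset.prod_fiberwise' univ g f, prod_const]

lemma preact_eq_motifPreact_window (N K M : ℕ) [NeZero N] (w : Fin K → Fin M → ℝ) (b : ℝ)
    (s : ZMod N → Fin M) (i : ZMod N) :
    preact N K M w b s i = motifPreact K M w b (window N K M s i) :=
  rfl

lemma motifCount_eq_card_window (N K M : ℕ) [NeZero N] (m' : Fin K → Fin M)
    (s : ZMod N → Fin M) :
    motifCount N K M m' s = #{i | window N K M s i = m'} := by
  simp only [motifCount, window, funext_iff]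

theorem cnn_is_correlator_product_state_general
    (N K M : ℕ) [NeZero N]
    (w : Fin K → Fin M → ℝ) (b v : ℝ) (s : ZMod N → Fin M) :
    Real.exp (lnPsi N K M w b v s)
      = ∏ m' : Fin K → Fin M,
          (Real.exp (v * max (motifPreact K M w b m') 0))
            ^ (motifCount N K M m' s) := by
  have exp_lnPsi : Real.exp (lnPsi N K M w b v s)
      = ∏ i, Real.exp (v * max (motifPreact K M w b (window N K M s i)) 0) := by
    simp only [lnPsi, Finset.mul_sum, Real.exp_sum, preact_eq_motifPreact_window]
  rw [exp_lnPsi, prod_comp_eq_prod_pow_card_fiber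
    (fun m' => Real.exp (v * max (motifPreact K M w b m') 0)) (window N K M s)]
  simp only [motifCount_eq_card_window]

/-- the CNN wavefunction is a correlator product state over
motifs, with correlator parameters `φ(m') = exp(v · max(q(m'), 0))`. -/
theorem cnn_is_correlator_product_state
    (N K M : ℕ) [NeZero N] (hM : 0 < M) (hMN : M ∣ N) (hK : K ≤ N)
    (w : Fin K → Fin M → ℝ) (b v : ℝ) (s : ZMod N → Fin M) :
    Real.exp (lnPsi N K M w b v s)
      = ∏ m' : Fin K → Fin M,
          (Real.exp (v * max (motifPreact K M w b m') 0))
            ^ (motifCount N K M m' s) :=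
  cnn_is_correlator_product_state_general N K M w b v s
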